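/- arXiv:2309.10760 — 4 statements merged into one kernel-verified Lean document; each statement's English description precedes it below -/
import Mathlib

section
/- Let X be a median space of rank n. Then for every a ∈ X and every r > 0, the convex hull of the closed ball B(a,r) is contained in the closed ball B(a, n·r). -/
/-- The interval `[a,b]` in a metric space: points `x` with `d(a,x) + d(x,b) = d(a,b)`. -/
def mInterval {X : Type*} [MetricSpace X] (a b : X) : Set X :=
  {x : X | dist a x + dist x b = dist a b}

/-- A median space: every triple of points has a unique median point. -/
def IsMedianSpace (X : Type*) [MetricSpace X] : Prop :=
  ∀ a b c : X, ∃! m : X,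
    m ∈ mInterval a b ∩ mInterval b c ∩ mInterval a c

/-- A subset is (median) convex if it contains the interval between any two of its points. -/
def MConvex {X : Type*} [MetricSpace X] (C : Set X) : Prop :=
  ∀ a ∈ C, ∀ b ∈ C, mInterval a b ⊆ C

/-- A halfspace: a convex subset with convex complement. -/
def IsHalfspace {X : Type*} [MetricSpace X] (h : Set X) : Prop :=
  MConvex h ∧ MConvex hᶜ

/-- Two subsets are transverse if the four pairwise intersections of them and
their complements are all nonempty. -/
def TransverseSets {X : Type*} (h₁ h₂ : Set X) : Prop :=
  (h₁ ∩ h₂).Nonempty ∧ (h₁ᶜ ∩ h₂).Nonempty ∧ (h₁ ∩ h₂ᶜ).Nonempty ∧ (h₁ᶜ ∩ h₂ᶜ).Nonempty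

/-- `X` has rank `n`: there are `n` pairwise transverse halfspaces but not `n+1`. -/
def HasMedianRank (X : Type*) [MetricSpace X] (n : ℕ) : Prop :=
  (∃ h : Fin n → Set X, (∀ i, IsHalfspace (h i)) ∧
    ∀ i j, i ≠ j → TransverseSets (h i) (h j)) ∧
  ¬ ∃ h : Fin (n + 1) → Set X, (∀ i, IsHalfspace (h i)) ∧
    ∀ i j, i ≠ j → TransverseSets (h i) (h j)

/-- Median convex hull: intersection of all convex subsets containing `A`. -/
def mConvexHull {X : Type*} [MetricSpace X] (A : Set X) : Set X :=
  ⋂₀ {C : Set X | MConvex C ∧ A ⊆ C}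

/-- The hyperplane bounding a halfspace `h`. -/
def mHyperplane {X : Type*} [MetricSpace X] (h : Set X) : Set X :=
  closure h ∩ closure hᶜ

/-- Depth of the halfspace `h` in the subset `A`:
`sup { d(x, ĥ) | x ∈ h ∩ A }`. -/
noncomputable def mDepth {X : Type*} [MetricSpace X] (A h : Set X) : ℝ :=
  sSup ((fun x => Metric.infDist x (mHyperplane h)) '' (h ∩ A))

/-- `π` is the nearest-point projection onto `C`. -/
def IsNearestPointProj {X : Type*} [MetricSpace X] (C : Set X) (π : X → X) : Prop :=
  ∀ x : X, π x ∈ C ∧ dist x (π x) = Metric.infDist x C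

/-- The halfspace `h` separates the points `x` and `y`. -/
def SeparatesPts {X : Type*} (h : Set X) (x y : X) : Prop :=
  (x ∈ h ∧ y ∈ hᶜ) ∨ (y ∈ h ∧ x ∈ hᶜ)

/-!
Fix `y` in the hull of `B(a, r)`. The gate projection `z ↦ median a y z` onto `[a, y]` makes
`[a, y]` a distributive lattice with `⊥ = a` and `⊤ = y`, and its sublevel sets
`{z | proj z ≤ J}` are convex; hence `y = ⊤` is a finite join of projections of ball points,
each at distance at most `r` from `a`. Since `d(a, s ⊔ t) ≤ d(a, s) + d(a, t)`, an irredundant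
such join of `m` points gives `d(a, y) ≤ m r`. Separating each of the `m` points from the join of
the others by a prime ideal and pulling back along the projection yields `m` pairwise transverse
halfspaces, so `m ≤ n`.
-/

section Betweenness

variable {X : Type*} [MetricSpace X] {a b c x y z w : X}

theorem mem_mInterval : x ∈ mInterval a b ↔ dist a x + dist x b = dist a b := Iff.rfl

theorem left_mem_mInterval (a b : X) : a ∈ mInterval a b := by simp [mem_mInterval]

theorem right_mem_mInterval (a b : X) : b ∈ mInterval a b := by simp [mem_mInterval]

theorem mInterval_comm (a b : X) : mInterval a b = mInterval b a := by
  ext x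
  simp only [mem_mInterval, dist_comm, add_comm]

theorem mem_mInterval_comm : x ∈ mInterval a b ↔ x ∈ mInterval b a := by
  rw [mInterval_comm]

theorem mInterval_subset_of_mem_left (hb : b ∈ mInterval a c) :
    mInterval a b ⊆ mInterval a c := by
  intro x hx
  rw [mem_mInterval] at *
  linarith [dist_triangle x b c, dist_triangle a x c]

theorem mInterval_subset_of_mem_right (hb : b ∈ mInterval a c) :
    mInterval b c ⊆ mInterval a c := by
  rw [mInterval_comm a, mInterval_comm b] at *
  exact mInterval_subset_of_mem_left hb

theorem mem_mInterval_of_mem_left (hb : b ∈ mInterval a c) (hx : x ∈ mInterval a b) :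
    b ∈ mInterval x c := by
  rw [mem_mInterval] at *
  linarith [dist_triangle x b c, dist_triangle a x c]

theorem mem_mInterval_of_mem_right (hb : b ∈ mInterval a c) (hx : x ∈ mInterval b c) :
    b ∈ mInterval a x := by
  rw [mInterval_comm a, mInterval_comm b] at *
  exact mem_mInterval_of_mem_left hb hx

theorem eq_of_mem_mInterval_of_mem (hx : x ∈ mInterval a y) (hy : y ∈ mInterval a x) :
    x = y := by
  rw [mem_mInterval] at *
  exact dist_le_zero.1 (by linarith [dist_comm x y])

theorem eq_of_mem_mInterval_inter (hz : z ∈ mInterval x y) (hx : w ∈ mInterval z x)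
    (hy : w ∈ mInterval z y) : w = z := by
  rw [mem_mInterval] at *
  exact (dist_le_zero.1 (by linarith [dist_triangle x w y, dist_comm w x, dist_comm z x])).symm

end Betweenness

section Median

variable {X : Type*} [MetricSpace X] [Fact (IsMedianSpace X)] {a b c u v w x y z : X}

noncomputable def median (a b c : X) : X :=
  ((Fact.out : IsMedianSpace X) a b c).exists.choose

theorem median_spec (a b c : X) :
    median a b c ∈ mInterval a b ∩ mInterval b c ∩ mInterval a c :=
  ((Fact.out : IsMedianSpace X) a b c).exists.choose_spec

theorem median_mem_mInterval_ab (a b c : X) : median a b c ∈ mInterval a b :=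
  (median_spec a b c).1.1

theorem median_mem_mInterval_bc (a b c : X) : median a b c ∈ mInterval b c :=
  (median_spec a b c).1.2

theorem median_mem_mInterval_ac (a b c : X) : median a b c ∈ mInterval a c :=
  (median_spec a b c).2

theorem eq_median (hab : x ∈ mInterval a b) (hbc : x ∈ mInterval b c)
    (hac : x ∈ mInterval a c) : x = median a b c :=
  ((Fact.out : IsMedianSpace X) a b c).unique ⟨⟨hab, hbc⟩, hac⟩ (median_spec a b c)

/-- The gate property: `median u v x` is the nearest-point projection of `x` onto `[u, v]`. -/
theorem median_mem_mInterval_of_mem (hw : w ∈ mInterval u v) (x : X) :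
    median u v x ∈ mInterval x w := by
  set n := median u w x
  set n' := median v w x
  have hn : n ∈ mInterval u w := median_mem_mInterval_ab u w x
  have hn' : n' ∈ mInterval v w := median_mem_mInterval_ab v w x
  have hw_nn' : w ∈ mInterval n n' := by
    set μ := median n n' w
    have hμu : μ ∈ mInterval w u := mInterval_subset_of_mem_left (mem_mInterval_comm.1 hn)
      (mem_mInterval_comm.1 (median_mem_mInterval_ac n n' w))
    have hμv : μ ∈ mInterval w v := mInterval_subset_of_mem_left (mem_mInterval_comm.1 hn')
      (mem_mInterval_comm.1 (median_mem_mInterval_bc n n' w))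
    rw [← eq_of_mem_mInterval_inter hw hμu hμv]
    exact median_mem_mInterval_ab n n' w
  set T := median n n' x
  have hTn : T ∈ mInterval x n := mem_mInterval_comm.1 (median_mem_mInterval_ac n n' x)
  have hTn' : T ∈ mInterval x n' := mem_mInterval_comm.1 (median_mem_mInterval_bc n n' x)
  have hTu : T ∈ mInterval u x := mem_mInterval_comm.1 <|
    mInterval_subset_of_mem_left (mem_mInterval_comm.1 (median_mem_mInterval_ac u w x)) hTn
  have hTv : T ∈ mInterval v x := mem_mInterval_comm.1 <|
    mInterval_subset_of_mem_left (mem_mInterval_comm.1 (median_mem_mInterval_ac v w x)) hTn'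
  have hTuv : T ∈ mInterval u v := by
    have hT := median_mem_mInterval_ab n n' x
    rw [mem_mInterval] at *
    linarith [dist_triangle u n T, dist_triangle T n' v, dist_triangle u T v, dist_comm n' v,
      dist_comm w n', dist_comm w v]
  rw [eq_median hTuv hTv hTu] at hTn
  exact mInterval_subset_of_mem_left (mem_mInterval_comm.1 (median_mem_mInterval_bc u w x)) hTn

theorem mConvex_setOf_mem_mInterval (c y : X) : MConvex {z | c ∈ mInterval z y} := by
  intro z₁ h₁ z₂ h₂ z hz
  simp only [Set.mem_ofPred_eq] at h₁ h₂ ⊢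
  set γ := median c z y
  set M := median z₁ z₂ c
  have hγ : γ ∈ mInterval c y := median_mem_mInterval_ac c z y
  have hM₁ : M ∈ mInterval z₁ c := median_mem_mInterval_ac z₁ z₂ c
  have hM₂ : M ∈ mInterval z₂ c := median_mem_mInterval_bc z₁ z₂ c
  have hM : M = median z₁ z₂ γ := eq_median (median_mem_mInterval_ab z₁ z₂ c)
    (mInterval_subset_of_mem_left (mem_mInterval_of_mem_right h₂ hγ) hM₂)
    (mInterval_subset_of_mem_left (mem_mInterval_of_mem_right h₁ hγ) hM₁)
  have hcMγ : c ∈ mInterval M γ :=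
    mem_mInterval_of_mem_right (mem_mInterval_of_mem_left h₁ hM₁) hγ
  have hMz : M ∈ mInterval c z := median_mem_mInterval_of_mem hz c
  have hMγz : M ∈ mInterval γ z := hM ▸ median_mem_mInterval_of_mem hz γ
  have hγz : γ ∈ mInterval c z := median_mem_mInterval_ab c z y
  have hcγ : c = γ := by
    rw [mem_mInterval] at *
    exact dist_le_zero.1 (by linarith [dist_comm M γ, dist_comm M c])
  rw [hcγ]
  exact median_mem_mInterval_bc c z y

theorem median_mem_mInterval_of_mem_of_mem {s t : X} (hw : w ∈ mInterval a b)
    (hs : s ∈ mInterval a w) (ht : t ∈ mInterval a w) : median s t b ∈ mInterval a w := by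
  have hP : median s t w = median s t b :=
    eq_median (median_mem_mInterval_ab s t w)
      (mInterval_subset_of_mem_left (mem_mInterval_of_mem_left hw ht)
        (median_mem_mInterval_bc s t w))
      (mInterval_subset_of_mem_left (mem_mInterval_of_mem_left hw hs)
        (median_mem_mInterval_ac s t w))
  rw [← hP]
  exact mInterval_subset_of_mem_right ht (median_mem_mInterval_bc s t w)

end Median

theorem inf_sup_le_of_median_law {α : Type*} [Lattice α]
    (h : ∀ x y z : α, (x ⊔ y) ⊓ (y ⊔ z) ⊓ (z ⊔ x) ≤ x ⊓ y ⊔ y ⊓ z ⊔ z ⊓ x) (x y z : α) :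
    x ⊓ (y ⊔ z) ≤ x ⊓ y ⊔ x ⊓ z := by
  set u := x ⊓ (y ⊔ z)
  set R := x ⊓ y ⊔ x ⊓ z
  have le_median : ∀ p q : α, u ≤ p ⊔ q → u ≤ u ⊓ p ⊔ p ⊓ q ⊔ q ⊓ u := fun p q hpq =>
    (le_inf (le_inf le_sup_left hpq) le_sup_right).trans (h u p q)
  have hu : u ≤ x := inf_le_left
  have hyR : u ⊓ y ≤ R := (inf_le_inf_right y hu).trans le_sup_left
  have hzR : z ⊓ u ≤ R := (le_inf (inf_le_right.trans hu) inf_le_left).trans le_sup_right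
  have h₁ : u ≤ R ⊔ y ⊓ z := (le_median y z inf_le_right).trans <|
    sup_le (sup_le (hyR.trans le_sup_left) le_sup_right) (hzR.trans le_sup_left)
  refine (le_median R (y ⊓ z) h₁).trans (sup_le (sup_le inf_le_right inf_le_left) ?_)
  exact (le_inf (inf_le_right.trans hu) (inf_le_left.trans inf_le_left)).trans le_sup_left

theorem Finset.exists_subset_sup_eq_forall_not_le_sup_erase {α : Type*} [SemilatticeSup α]
    [OrderBot α] [DecidableEq α] (T : Finset α) :
    ∃ S ⊆ T, S.sup id = T.sup id ∧ ∀ s ∈ S, ¬ s ≤ (S.erase s).sup id := by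
  induction T using Finset.strongInduction with
  | H T ih =>
    by_cases hT : ∀ s ∈ T, ¬ s ≤ (T.erase s).sup id
    · exact ⟨T, subset_rfl, rfl, hT⟩
    push Not at hT
    obtain ⟨s, hs, hle⟩ := hT
    obtain ⟨S, hST, hS, hirr⟩ := ih _ (Finset.erase_ssubset hs)
    refine ⟨S, hST.trans (Finset.erase_subset s T), hS.trans ?_, hirr⟩
    conv_rhs => rw [← Finset.insert_erase hs]
    rw [Finset.sup_insert, id, sup_eq_right.2 hle]

theorem HasMedianRank.card_le {X : Type*} [MetricSpace X] {n : ℕ} (hX : HasMedianRank X n)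
    {ι : Type*} [Fintype ι] {H : ι → Set X} (hH : ∀ i, IsHalfspace (H i))
    (hHH : Pairwise fun i j => TransverseSets (H i) (H j)) : Fintype.card ι ≤ n := by
  by_contra! hn
  obtain ⟨e⟩ := Function.Embedding.nonempty_of_card_le (α := Fin (n + 1)) (β := ι)
    (by simpa using hn)
  exact hX.2 ⟨H ∘ e, fun i => hH (e i), fun i j hij => hHH (e.injective.ne hij)⟩

def IntervalLattice {X : Type*} [MetricSpace X] (a b : X) : Type _ := mInterval a b

namespace IntervalLattice

variable {X : Type*} [MetricSpace X] {a b : X}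

instance : CoeOut (IntervalLattice a b) X := ⟨Subtype.val⟩

instance : PartialOrder (IntervalLattice a b) where
  le x y := (x : X) ∈ mInterval a y
  le_refl x := right_mem_mInterval a x
  le_trans _ _ _ hxy hyz := mInterval_subset_of_mem_left hyz hxy
  le_antisymm _ _ hxy hyx := Subtype.ext (eq_of_mem_mInterval_of_mem hxy hyx)

theorem le_def {x y : IntervalLattice a b} : x ≤ y ↔ (x : X) ∈ mInterval a y := Iff.rfl

instance : BoundedOrder (IntervalLattice a b) where
  bot := ⟨a, left_mem_mInterval a b⟩
  bot_le x := left_mem_mInterval a x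
  top := ⟨b, right_mem_mInterval a b⟩
  le_top x := x.2

variable [Fact (IsMedianSpace X)]

noncomputable instance : Lattice (IntervalLattice a b) where
  sup x y := ⟨median (x : X) y b,
    mInterval_subset_of_mem_right y.2 (median_mem_mInterval_bc (x : X) y b)⟩
  le_sup_left x y := mem_mInterval_of_mem_right x.2 (median_mem_mInterval_ac (x : X) y b)
  le_sup_right x y := mem_mInterval_of_mem_right y.2 (median_mem_mInterval_bc (x : X) y b)
  sup_le x y z := median_mem_mInterval_of_mem_of_mem z.2
  inf x y := ⟨median (x : X) y a,
    mInterval_subset_of_mem_left x.2 (mem_mInterval_comm.1 (median_mem_mInterval_ac (x : X) y a))⟩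
  inf_le_left x y := mem_mInterval_comm.1 (median_mem_mInterval_ac (x : X) y a)
  inf_le_right x y := mem_mInterval_comm.1 (median_mem_mInterval_bc (x : X) y a)
  le_inf z x y hzx hzy := by
    have hx : (x : X) ∈ mInterval b z := mem_mInterval_comm.1 (mem_mInterval_of_mem_left x.2 hzx)
    have hy : (y : X) ∈ mInterval b z := mem_mInterval_comm.1 (mem_mInterval_of_mem_left y.2 hzy)
    exact mem_mInterval_of_mem_right z.2 <| mem_mInterval_comm.1 <|
      median_mem_mInterval_of_mem_of_mem (mem_mInterval_comm.1 z.2) hx hy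

theorem mem_mInterval_of_inf_le_of_le_sup {x y z : IntervalLattice a b} (h₁ : x ⊓ y ≤ z)
    (h₂ : z ≤ x ⊔ y) : (z : X) ∈ mInterval (x : X) y := by
  have hz : (z : X) ∈ mInterval ((x ⊓ y : IntervalLattice a b) : X) (x ⊔ y : IntervalLattice a b) :=
    mem_mInterval_of_mem_left h₂ h₁
  have hW := eq_of_mem_mInterval_inter hz
    (median_mem_mInterval_of_mem (median_mem_mInterval_ab (x : X) y a) z)
    (median_mem_mInterval_of_mem (median_mem_mInterval_ab (x : X) y b) z)
  rw [← hW]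
  exact median_mem_mInterval_ab (x : X) y z

theorem coe_eq_median {x y z w : IntervalLattice a b} (hxy : x ⊓ y ≤ w ∧ w ≤ x ⊔ y)
    (hyz : y ⊓ z ≤ w ∧ w ≤ y ⊔ z) (hzx : z ⊓ x ≤ w ∧ w ≤ z ⊔ x) :
    (w : X) = median (x : X) y z :=
  eq_median (mem_mInterval_of_inf_le_of_le_sup hxy.1 hxy.2)
    (mem_mInterval_of_inf_le_of_le_sup hyz.1 hyz.2)
    (mem_mInterval_comm.1 (mem_mInterval_of_inf_le_of_le_sup hzx.1 hzx.2))

theorem median_law (x y z : IntervalLattice a b) :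
    (x ⊔ y) ⊓ (y ⊔ z) ⊓ (z ⊔ x) ≤ x ⊓ y ⊔ y ⊓ z ⊔ z ⊓ x := by
  refine le_of_eq (Subtype.ext ((coe_eq_median (x := x) (y := y) (z := z) ?_ ?_ ?_).trans
    (coe_eq_median (x := x) (y := y) (z := z) ?_ ?_ ?_).symm)) <;>
  simp [inf_le_of_left_le, le_sup_of_le_left, le_sup_of_le_right]

noncomputable instance : DistribLattice (IntervalLattice a b) :=
  DistribLattice.ofInfSupLe (inf_sup_le_of_median_law median_law)

theorem dist_sup_le (x y : IntervalLattice a b) :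
    dist a ((x ⊔ y : IntervalLattice a b) : X) ≤ dist a x + dist a y := by
  have hx : x ≤ x ⊔ y := le_sup_left
  have hy : y ≤ x ⊔ y := le_sup_right
  have hxy : ((x ⊔ y : IntervalLattice a b) : X) ∈ mInterval (x : X) y :=
    median_mem_mInterval_ab (x : X) y b
  rw [le_def, mem_mInterval] at hx hy
  rw [mem_mInterval] at hxy
  linarith [dist_triangle (x : X) a y, dist_comm (x : X) a,
    dist_comm (y : X) ((x ⊔ y : IntervalLattice a b) : X)]

theorem dist_finset_sup_le (T : Finset (IntervalLattice a b)) :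
    dist a ((T.sup id : IntervalLattice a b) : X) ≤ ∑ t ∈ T, dist a (t : X) := by
  induction T using Finset.cons_induction with
  | empty => exact (dist_self a).le
  | cons t T ht ih =>
    rw [Finset.sup_cons, Finset.sum_cons]
    exact (dist_sup_le _ _).trans (add_le_add le_rfl ih)

noncomputable def proj (z : X) : IntervalLattice a b :=
  ⟨median a b z, median_mem_mInterval_ab a b z⟩

theorem proj_coe (x : IntervalLattice a b) : proj (x : X) = x :=
  Subtype.ext (eq_median x.2 (right_mem_mInterval _ _) (right_mem_mInterval _ _)).symm

theorem dist_proj_le (z : X) : dist a (proj z : IntervalLattice a b) ≤ dist a z := by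
  have h := median_mem_mInterval_ac a b z
  rw [mem_mInterval] at h
  exact le_of_add_le_of_nonneg_left h.le dist_nonneg

theorem proj_le_iff {z : X} {x : IntervalLattice a b} :
    proj z ≤ x ↔ (x : X) ∈ mInterval z b := by
  have ha := median_mem_mInterval_of_mem (left_mem_mInterval a b) z
  have hb := median_mem_mInterval_of_mem (right_mem_mInterval a b) z
  have hx := median_mem_mInterval_of_mem x.2 z
  have hab := median_mem_mInterval_ab a b z
  have hxab := x.2
  change median a b z ∈ mInterval a x ↔ _
  simp only [mem_mInterval] at *
  constructor <;> intro h <;> linarith [dist_comm a (median a b z)]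

theorem le_proj_iff {z : X} {x : IntervalLattice a b} :
    x ≤ proj z ↔ (x : X) ∈ mInterval a z := by
  have ha := median_mem_mInterval_of_mem (left_mem_mInterval a b) z
  have hx := median_mem_mInterval_of_mem x.2 z
  have haz := median_mem_mInterval_ac a b z
  change (x : X) ∈ mInterval a (median a b z) ↔ _
  simp only [mem_mInterval] at *
  constructor <;> intro h <;>
    linarith [dist_comm a (median a b z), dist_comm (x : X) z, dist_comm (median a b z) z,
      dist_comm (x : X) (median a b z), dist_triangle a (x : X) (median a b z),
      dist_triangle a (x : X) z, dist_triangle (x : X) (median a b z) z]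

theorem mConvex_setOf_proj_le (x : IntervalLattice a b) : MConvex {z | proj z ≤ x} := by
  simpa only [proj_le_iff] using mConvex_setOf_mem_mInterval (x : X) b

theorem mConvex_setOf_le_proj (x : IntervalLattice a b) : MConvex {z | x ≤ proj z} := by
  simpa only [le_proj_iff, mem_mInterval_comm (a := a)] using mConvex_setOf_mem_mInterval (x : X) a

theorem isHalfspace_preimage_proj_compl {I : Order.Ideal (IntervalLattice a b)}
    (hI : I.IsPrime) :
    IsHalfspace (proj ⁻¹' (I : Set (IntervalLattice a b))ᶜ) := by
  constructor
  · intro z₁ h₁ z₂ h₂ ξ hξ hξI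
    set K : IntervalLattice a b := proj z₁ ⊓ proj z₂
    have hK₁ : K ≤ proj z₁ := inf_le_left
    have hK₂ : K ≤ proj z₂ := inf_le_right
    have h : K ≤ proj ξ := mConvex_setOf_le_proj K z₁ hK₁ z₂ hK₂ hξ
    rcases hI.mem_or_mem (I.lower h hξI) with h | h
    exacts [h₁ h, h₂ h]
  · intro z₁ h₁ z₂ h₂ ξ hξ
    set J : IntervalLattice a b := proj z₁ ⊔ proj z₂
    have hJ₁ : proj z₁ ≤ J := le_sup_left
    have hJ₂ : proj z₂ ≤ J := le_sup_right
    have h : proj ξ ≤ J := mConvex_setOf_proj_le J z₁ hJ₁ z₂ hJ₂ hξ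
    exact not_not.2 (I.lower h (Order.Ideal.sup_mem (not_not.1 h₁) (not_not.1 h₂)))

theorem exists_isHalfspace_of_not_le {s t : IntervalLattice a b} (hst : ¬ s ≤ t) :
    ∃ H : Set X, IsHalfspace H ∧ (∀ x : IntervalLattice a b, s ≤ x → (x : X) ∈ H) ∧
      ∀ x : IntervalLattice a b, x ≤ t → (x : X) ∉ H := by
  obtain ⟨I, hI, htI, hsI⟩ := DistribLattice.prime_ideal_of_disjoint_filter_ideal
    (F := Order.PFilter.principal s) (I := Order.Ideal.principal t)
    (Set.disjoint_left.2 fun x hsx htx => hst (le_trans hsx htx))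
  refine ⟨_, isHalfspace_preimage_proj_compl hI, fun x hx => ?_, fun x hx => ?_⟩
  · show proj (x : X) ∉ I
    rw [proj_coe]
    exact Set.disjoint_left.1 hsI hx
  · show ¬ proj (x : X) ∉ I
    rw [proj_coe]
    exact not_not.2 (htI (Order.Ideal.mem_principal.2 hx))

theorem card_le_of_forall_not_le_sup_erase {n : ℕ} (hX : HasMedianRank X n)
    [DecidableEq (IntervalLattice a b)] {T : Finset (IntervalLattice a b)}
    (hT : ∀ s ∈ T, ¬ s ≤ (T.erase s).sup id) : T.card ≤ n := by
  choose H hH hmem hnot using fun s : T => exists_isHalfspace_of_not_le (hT s s.2)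
  have hle : ∀ s t : T, s ≠ t → (t : IntervalLattice a b) ≤ (T.erase s).sup id :=
    fun s t hst =>
    Finset.le_sup (f := id) (Finset.mem_erase.2 ⟨fun h => hst (Subtype.ext h).symm, t.2⟩)
  simpa using hX.card_le hH fun s t hst =>
    ⟨⟨b, hmem s ⊤ le_top, hmem t ⊤ le_top⟩, ⟨t, hnot s t (hle s t hst), hmem t t le_rfl⟩,
      ⟨s, hmem s s le_rfl, hnot t s (hle t s hst.symm)⟩, ⟨a, hnot s ⊥ bot_le, hnot t ⊥ bot_le⟩⟩

theorem exists_finset_sup_eq_top {y : X} {r : ℝ}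
    (hy : y ∈ mConvexHull (Metric.closedBall a r)) :
    ∃ T : Finset (IntervalLattice a y), (∀ t ∈ T, dist a (t : X) ≤ r) ∧ T.sup id = ⊤ := by
  classical
  set C := {z | ∃ T : Finset (IntervalLattice a y),
    (∀ t ∈ T, dist a (t : X) ≤ r) ∧ proj z ≤ T.sup id}
  have hC : MConvex C := by
    rintro z₁ ⟨T₁, hT₁, h₁⟩ z₂ ⟨T₂, hT₂, h₂⟩ ξ hξ
    refine ⟨T₁ ∪ T₂, fun t ht => (Finset.mem_union.1 ht).elim (hT₁ t) (hT₂ t), ?_⟩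
    exact mConvex_setOf_proj_le _ z₁ (h₁.trans (Finset.sup_mono Finset.subset_union_left))
      z₂ (h₂.trans (Finset.sup_mono Finset.subset_union_right)) hξ
  have hball : Metric.closedBall a r ⊆ C := fun z hz =>
    ⟨{proj z}, by simpa using (dist_proj_le z).trans (Metric.mem_closedBall'.1 hz), by simp⟩
  obtain ⟨T, hT, hyT⟩ :=
    Set.sInter_subset_of_mem (show C ∈ {C | MConvex C ∧ _} from ⟨hC, hball⟩) hy
  exact ⟨T, hT, top_unique ((proj_coe (⊤ : IntervalLattice a y)).symm.trans_le hyT)⟩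

end IntervalLattice

/-- In a median space of rank `n`, the convex hull of the closed ball `B(a,r)`
is contained in the closed ball `B(a, n·r)`. -/
theorem statement2 (X : Type*) [MetricSpace X] (hmed : IsMedianSpace X)
    (n : ℕ) (hrank : HasMedianRank X n) (a : X) (r : ℝ) (hr : 0 < r) :
    mConvexHull (Metric.closedBall a r) ⊆ Metric.closedBall a (n * r) := by
  have : Fact (IsMedianSpace X) := ⟨hmed⟩
  classical
  intro y hy
  obtain ⟨T, hTr, hT⟩ := IntervalLattice.exists_finset_sup_eq_top hy
  obtain ⟨S, hST, hS, hirr⟩ := T.exists_subset_sup_eq_forall_not_le_sup_erase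
  rw [Metric.mem_closedBall, dist_comm]
  calc dist a y = dist a ((S.sup id : IntervalLattice a y) : X) := by rw [hS, hT]; rfl
    _ ≤ ∑ s ∈ S, dist a (s : X) := IntervalLattice.dist_finset_sup_le S
    _ ≤ S.card • r := Finset.sum_le_card_nsmul _ _ _ fun s hs => hTr s (hST hs)
    _ ≤ n * r := by
      rw [nsmul_eq_mul]
      gcongr
      exact_mod_cast IntervalLattice.card_le_of_forall_not_le_sup_erase hrank hirr
end

section
/- Let X be a complete connected median space of finite rank and let a, b ∈ X with a ≠ b. Then there exists a halfspace h of X with b ∈ h, a ∈ hᶜ and d(a, h) = 0. Consequently, for every a ∈ X, the intersection of all halfspaces h with a ∈ h and a ∈ closure(h) ∩ closure(hᶜ) equals {a}. -/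
/-!
The basic median-space fact, derived from uniqueness of medians, is that intervals are convex,
so that the median of `u, w, v` is the gate of `w` in `[u, v]`. By Zorn's lemma there is a
maximal median-convex set `C` with `b ∈ C` and `a ∉ C`. For `x ∉ C` the join of `x` and `C` is
convex, so by maximality it contains `a`: every point outside `C` sees `a` on a geodesic towards
`C`. The set of such points is convex, hence `C` is a halfspace. Medians then show that every
point outside `C` is at least as far from `C` as `a` is; since a connected space has a point of
`frontier C`, this forces `d(a, C) = 0`. The second part follows by applying the first to the
complementary halfspace.
-/

open Metric Set

/-- `x ∈ mInterval a b`, as a predicate with dot notation. -/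
def MBtw {X : Type*} [MetricSpace X] (a x b : X) : Prop :=
  dist a x + dist x b = dist a b

def IsMedian {X : Type*} [MetricSpace X] (a b c m : X) : Prop :=
  MBtw a m b ∧ MBtw b m c ∧ MBtw a m c

section

variable {X : Type*} [MetricSpace X]

namespace MBtw

variable {a b w x y z : X}

theorem symm (h : MBtw a x b) : MBtw b x a := by
  unfold MBtw at *
  linarith [dist_comm a x, dist_comm x b, dist_comm a b]

theorem left (a b : X) : MBtw a a b := by
  simp [MBtw]

theorem eq_of_self (h : MBtw a x a) : x = a := by
  unfold MBtw at h
  have : dist a x = 0 := by linarith [dist_comm a x, dist_nonneg (x := a) (y := x), dist_self a]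
  exact (dist_eq_zero.mp this).symm

theorem trans_left (h₁ : MBtw w y z) (h₂ : MBtw w x y) : MBtw w x z := by
  unfold MBtw at *
  linarith [dist_triangle w x z, dist_triangle x y z]

theorem trans_left_right (h₁ : MBtw w y z) (h₂ : MBtw w x y) : MBtw x y z := by
  unfold MBtw at *
  linarith [dist_triangle w x z, dist_triangle x y z]

theorem trans_right (h₁ : MBtw w x z) (h₂ : MBtw x y z) : MBtw w y z :=
  (h₁.symm.trans_left h₂.symm).symm

theorem trans_right_left (h₁ : MBtw w x z) (h₂ : MBtw x y z) : MBtw w x y :=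
  (h₁.symm.trans_left_right h₂.symm).symm

theorem eq_of_mBtw (h₁ : MBtw w x y) (h₂ : MBtw w y x) : x = y := by
  unfold MBtw at *
  have : dist x y = 0 := by linarith [dist_comm x y, dist_nonneg (x := x) (y := y)]
  exact dist_eq_zero.mp this

theorem dist_le_of_mBtw (h₁ : MBtw x a y) (h₂ : MBtw a y z) : dist a y ≤ dist x z := by
  unfold MBtw at *
  linarith [dist_triangle x z y, dist_triangle a x z, dist_comm x a, dist_comm z y]

end MBtw

namespace IsMedianSpace

variable {a b c r u v x y z : X}

theorem exists_isMedian (hmed : IsMedianSpace X) (a b c : X) : ∃ m, IsMedian a b c m :=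
  let ⟨m, ⟨⟨h₁, h₂⟩, h₃⟩, _⟩ := hmed a b c
  ⟨m, h₁, h₂, h₃⟩

theorem isMedian_unique (hmed : IsMedianSpace X) {m m' : X} (h : IsMedian a b c m)
    (h' : IsMedian a b c m') : m = m' :=
  (hmed a b c).unique ⟨⟨h.1, h.2.1⟩, h.2.2⟩ ⟨⟨h'.1, h'.2.1⟩, h'.2.2⟩

theorem mBtw_of_isMedian_of_isMedian (hmed : IsMedianSpace X) {e m : X} (hy : MBtw a y b)
    (he : IsMedian a y r e) (hm : IsMedian a b r m) : MBtw r m e := by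
  obtain ⟨f, hf⟩ := hmed.exists_isMedian b y r
  obtain ⟨k, hk⟩ := hmed.exists_isMedian r e f
  have hbfe : MBtw b f e := (hy.trans_left_right he.1).symm.trans_left hf.1
  have hk_ab : MBtw a k b := (hy.trans_left he.1).trans_right (hbfe.symm.trans_left hk.2.1)
  have hk_ar : MBtw a k r := he.2.2.trans_right hk.1.symm
  have hk_br : MBtw b k r := hf.2.2.trans_right hk.2.2.symm
  obtain rfl : k = m := hmed.isMedian_unique ⟨hk_ab, hk_br, hk_ar⟩ hm
  exact hk.1

theorem mConvex_mInterval (hmed : IsMedianSpace X) (a b : X) : MConvex (mInterval a b) := by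
  intro x hx y hy r (hr : MBtw x r y)
  obtain ⟨m, hm⟩ := hmed.exists_isMedian a b r
  obtain ⟨e, he⟩ := hmed.exists_isMedian a x r
  obtain ⟨e', he'⟩ := hmed.exists_isMedian a y r
  have hrme : MBtw r m e := hmed.mBtw_of_isMedian_of_isMedian hx he hm
  have hrme' : MBtw r m e' := hmed.mBtw_of_isMedian_of_isMedian hy he' hm
  -- `m` lies between `r` and each of `e`, `e'`, while `r` lies between `e` and `e'`
  have here' : MBtw e r e' := (hr.trans_left_right he.2.1).trans_right_left he'.2.1.symm
  obtain rfl : r = m := (here'.trans_right_left hrme').eq_of_mBtw hrme.symm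
  exact hm.1

/-- The median of `u, w, v` is the gate of `w` in the interval `[u, v]`. -/
theorem mBtw_of_isMedian_of_mBtw (hmed : IsMedianSpace X) {w g t : X} (hg : IsMedian u w v g)
    (ht : MBtw u t v) : MBtw w g t := by
  obtain ⟨n, hn⟩ := hmed.exists_isMedian w g t
  have hn_uv : MBtw u n v := hmed.mConvex_mInterval u v g hg.2.2 t ht hn.2.1
  obtain rfl : n = g :=
    hmed.isMedian_unique ⟨hg.1.trans_right hn.1.symm, hg.2.1.trans_left hn.1, hn_uv⟩ hg
  exact hn.2.2

theorem mBtw_of_mBtw_of_isMedian (hmed : IsMedianSpace X) {m : X} (hu : MBtw x u c)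
    (hz : MBtw u z v) (hm : IsMedian z c v m) : MBtw x z m := by
  obtain ⟨g, hg⟩ := hmed.exists_isMedian x z c
  have hzgu : MBtw z g u := hmed.mBtw_of_isMedian_of_mBtw hg hu
  have hgzm : MBtw g z m := (hz.trans_left_right hzgu.symm).trans_right_left hm.2.2
  have hxgm : MBtw x g m := hmed.mBtw_of_isMedian_of_mBtw ⟨hg.1.symm, hg.2.2, hg.2.1⟩ hm.1
  exact hxgm.trans_right hgzm

theorem mConvex_join (hmed : IsMedianSpace X) {C : Set X} (hC : MConvex C) (x : X) :
    MConvex {w | ∃ y ∈ C, MBtw x w y} := by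
  rintro u ⟨c, hc, hu⟩ v ⟨d, hd, hv⟩ z hz
  obtain ⟨m, hm⟩ := hmed.exists_isMedian z c v
  obtain ⟨m', hm'⟩ := hmed.exists_isMedian m d c
  have hxzm : MBtw x z m := hmed.mBtw_of_mBtw_of_isMedian hu hz hm
  have hxmm' : MBtw x m m' := hmed.mBtw_of_mBtw_of_isMedian hv hm.2.1.symm hm'
  exact ⟨m', hC c hc d hd hm'.2.1.symm, hxmm'.trans_left hxzm⟩

theorem mConvex_shadow (hmed : IsMedianSpace X) {C : Set X} (hC : MConvex C) (a : X) :
    MConvex {x | ∃ y ∈ C, MBtw x a y} := by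
  rintro x ⟨c, hc, hx⟩ y ⟨c', hc', hy⟩ z hz
  obtain ⟨g, hg⟩ := hmed.exists_isMedian z a c
  obtain ⟨g', hg'⟩ := hmed.exists_isMedian z a c'
  obtain ⟨n, hn⟩ := hmed.exists_isMedian g a g'
  obtain ⟨s, hs⟩ := hmed.exists_isMedian a x y
  have hxan : MBtw x a n := (hx.trans_right_left hg.2.1).trans_right_left hn.1.symm
  have hyan : MBtw y a n := (hy.trans_right_left hg'.2.1).trans_right_left hn.2.1
  have hnsz : MBtw n s z := hmed.mBtw_of_isMedian_of_mBtw
    ⟨hxan.trans_left hs.1.symm, hyan.symm.trans_right hs.2.2, hs.2.1⟩ hz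
  obtain rfl : n = a :=
    (hg.1.trans_right hn.1).eq_of_mBtw (hnsz.trans_left (hxan.symm.trans_right_left hs.1)).symm
  obtain ⟨w, hw, hzw⟩ := hmed.mConvex_join (hmed.mConvex_mInterval c c') z
    g ⟨c, MBtw.left c c', hg.2.2⟩ g' ⟨c', (MBtw.left c' c).symm, hg'.2.2⟩ hn.2.2
  exact ⟨w, hC c hc c' hc' hw, hzw⟩

end IsMedianSpace

theorem MConvex.sUnion_of_isChain {c : Set (Set X)} (hc : ∀ C ∈ c, MConvex C)
    (hchain : IsChain (· ⊆ ·) c) : MConvex (⋃₀ c) := by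
  rintro x ⟨C, hC, hx⟩ y ⟨D, hD, hy⟩
  obtain hCD | hDC := hchain.total hC hD
  · exact (hc D hD x (hCD hx) y hy).trans (subset_sUnion_of_mem hD)
  · exact (hc C hC x hx y (hDC hy)).trans (subset_sUnion_of_mem hC)

theorem IsHalfspace.compl {h : Set X} (hh : IsHalfspace h) : IsHalfspace hᶜ :=
  ⟨hh.2, (compl_compl h).symm ▸ hh.1⟩

theorem exists_maximal_mConvex_notMem {a b : X} (hab : a ≠ b) :
    ∃ C, b ∈ C ∧ Maximal (fun C => MConvex C ∧ a ∉ C) C := by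
  have hb : MConvex ({b} : Set X) := by
    rintro _ rfl _ rfl x hx
    exact MBtw.eq_of_self hx
  have hub (c : Set (Set X)) (hc : c ⊆ {C | MConvex C ∧ a ∉ C})
      (hc' : IsChain (· ⊆ ·) c) : MConvex (⋃₀ c) ∧ a ∉ ⋃₀ c :=
    ⟨MConvex.sUnion_of_isChain (fun _ h => (hc h).1) hc', fun ⟨_, hD, haD⟩ => (hc hD).2 haD⟩
  obtain ⟨C, hbC, hC⟩ := zorn_subset_nonempty {C | MConvex C ∧ a ∉ C}
    (fun c hc hc' _ => ⟨⋃₀ c, hub c hc hc', fun _ => subset_sUnion_of_mem⟩)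
    {b} ⟨hb, hab⟩
  exact ⟨C, hbC rfl, hC⟩

theorem Metric.infDist_eq_zero_of_forall_notMem_le [ConnectedSpace X] {C : Set X} {a : X}
    (hne : C.Nonempty) (hC : C ≠ univ) (h : ∀ x ∉ C, infDist a C ≤ infDist x C) :
    infDist a C = 0 := by
  obtain ⟨p, hpC, hpC'⟩ : (closure C ∩ closure Cᶜ).Nonempty :=
    frontier_eq_closure_inter_closure (s := C) ▸ nonempty_frontier_iff.2 ⟨hne, hC⟩
  have hp : infDist a C ≤ infDist p C :=
    closure_minimal h (isClosed_le continuous_const (continuous_infDist_pt C)) hpC'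
  exact le_antisymm (hp.trans_eq (infDist_zero_of_mem_closure hpC)) infDist_nonneg

namespace IsMedianSpace

variable {a x y : X} {C : Set X}

theorem exists_mBtw_of_maximal (hmed : IsMedianSpace X)
    (hC : Maximal (fun C => MConvex C ∧ a ∉ C) C) (hne : C.Nonempty) (hx : x ∉ C) :
    ∃ y ∈ C, MBtw x a y := by
  by_contra ha
  obtain ⟨c, hc⟩ := hne
  have hJ : C ⊆ {w | ∃ y ∈ C, MBtw x w y} := fun y hy => ⟨y, hy, (MBtw.left y x).symm⟩
  exact hx (hC.2 ⟨hmed.mConvex_join hC.1.1 x, ha⟩ hJ ⟨c, hc, MBtw.left x c⟩)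

theorem isHalfspace_of_maximal (hmed : IsMedianSpace X)
    (hC : Maximal (fun C => MConvex C ∧ a ∉ C) C) (hne : C.Nonempty) : IsHalfspace C := by
  have hCc : Cᶜ = {x | ∃ y ∈ C, MBtw x a y} := by
    refine Subset.antisymm (fun x hx => hmed.exists_mBtw_of_maximal hC hne hx) ?_
    rintro x ⟨y, hy, hxy⟩ hx
    exact hC.1.2 (hC.1.1 x hx y hy hxy)
  exact ⟨hC.1.1, hCc ▸ hmed.mConvex_shadow hC.1.1 a⟩

theorem infDist_le_infDist_of_mBtw (hmed : IsMedianSpace X) (hC : MConvex C) (hy : y ∈ C)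
    (hxy : MBtw x a y) : infDist a C ≤ infDist x C := by
  refine (le_infDist ⟨y, hy⟩).2 fun z hz => ?_
  obtain ⟨m, hm⟩ := hmed.exists_isMedian a y z
  calc infDist a C ≤ dist a m := infDist_le_dist_of_mem (hC y hy z hz hm.2.1)
    _ ≤ dist x z := (hxy.trans_right_left hm.1).dist_le_of_mBtw hm.2.2

theorem exists_isHalfspace_infDist_eq_zero [ConnectedSpace X] (hmed : IsMedianSpace X)
    {a b : X} (hab : a ≠ b) :
    ∃ h, IsHalfspace h ∧ b ∈ h ∧ a ∈ hᶜ ∧ infDist a h = 0 := by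
  obtain ⟨C, hbC, hC⟩ := exists_maximal_mConvex_notMem hab
  refine ⟨C, hmed.isHalfspace_of_maximal hC ⟨b, hbC⟩, hbC, hC.1.2, ?_⟩
  have hCne : C ≠ univ := (ne_univ_iff_exists_notMem C).2 ⟨a, hC.1.2⟩
  refine infDist_eq_zero_of_forall_notMem_le ⟨b, hbC⟩ hCne fun x hx => ?_
  obtain ⟨y, hy, hxy⟩ := hmed.exists_mBtw_of_maximal hC ⟨b, hbC⟩ hx
  exact hmed.infDist_le_infDist_of_mBtw hC.1.1 hy hxy

end IsMedianSpace

end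

theorem statement3_general (X : Type*) [MetricSpace X] [ConnectedSpace X]
    (hmed : IsMedianSpace X) :
    (∀ a b : X, a ≠ b → ∃ h : Set X, IsHalfspace h ∧ b ∈ h ∧ a ∈ hᶜ ∧
      Metric.infDist a h = 0) ∧
    (∀ a : X, ⋂₀ {h : Set X | IsHalfspace h ∧ a ∈ h ∧ a ∈ mHyperplane h} = {a}) := by
  refine ⟨fun a b hab => hmed.exists_isHalfspace_infDist_eq_zero hab, fun a => ?_⟩
  refine Subset.antisymm (fun x hx => ?_) ?_
  swap
  · rintro x rfl
    exact mem_sInter.2 fun h hh => hh.2.1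
  by_contra hxa
  obtain ⟨h, hh, hxh, hah, hd⟩ := hmed.exists_isHalfspace_infDist_eq_zero (Ne.symm hxa)
  have hah' : a ∈ closure h := (mem_closure_iff_infDist_zero ⟨x, hxh⟩).2 hd
  have ha : a ∈ mHyperplane hᶜ := ⟨subset_closure hah, (compl_compl h).symm ▸ hah'⟩
  exact mem_sInter.1 hx hᶜ ⟨hh.compl, hah, ha⟩ hxh

/-- In a complete connected median space of finite rank, any two distinct points are
separated by a halfspace at distance `0` from the first point; consequently every point
is the intersection of the closed halfspaces branched at it and containing it. -/
theorem statement3 (X : Type*) [MetricSpace X] [CompleteSpace X] [ConnectedSpace X]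
    (hmed : IsMedianSpace X) (hrank : ∃ n : ℕ, HasMedianRank X n) :
    (∀ a b : X, a ≠ b → ∃ h : Set X, IsHalfspace h ∧ b ∈ h ∧ a ∈ hᶜ ∧
      Metric.infDist a h = 0) ∧
    (∀ a : X, ⋂₀ {h : Set X | IsHalfspace h ∧ a ∈ h ∧ a ∈ mHyperplane h} = {a}) :=
  statement3_general X hmed
end

section
/- Let X be a median space, let C be a nonempty convex subset of X, let a, b ∈ X, and let x ∈ [a,b]. Then d(x, C) ≤ d(a, C) + d(b, C). -/
/-!
For `p, q ∈ C`, the median `m` of `x, p, q` lies in `[p,q] ⊆ C`, and the Gromov-product identity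
`2 d(x,m) = d(x,p) + d(x,q) - d(p,q)` together with `x ∈ [a,b]` and the triangle inequality gives
`d(x,m) ≤ d(a,p) + d(b,q)`. Taking the infimum over `p` and `q` yields the claim.
-/

open Metric

section MetricLemmas

variable {X : Type*} [MetricSpace X]

lemma two_mul_dist_add_dist_eq_of_median {x p q m : X} (hxp : m ∈ mInterval x p)
    (hpq : m ∈ mInterval p q) (hxq : m ∈ mInterval x q) :
    2 * dist x m + dist p q = dist x p + dist x q := by
  simp only [mInterval, Set.mem_ofPred_eq] at hxp hpq hxq
  linarith [dist_comm p m]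

lemma dist_add_dist_le_of_mem_mInterval {a b x : X} (hx : x ∈ mInterval a b) (p q : X) :
    dist x p + dist x q ≤ 2 * (dist a p + dist b q) + dist p q := by
  have hab : dist a x + dist x b = dist a b := hx
  have hab_le : dist a b ≤ dist a p + dist p q + dist b q := by
    linarith [dist_triangle a p b, dist_triangle p q b, dist_comm q b]
  linarith [dist_triangle x a p, dist_triangle x b q, dist_comm x a, dist_comm x b]

lemma le_infDist_add_infDist {C : Set X} {a b : X} {r : ℝ} (hC : C.Nonempty)
    (h : ∀ p ∈ C, ∀ q ∈ C, r ≤ dist a p + dist b q) :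
    r ≤ infDist a C + infDist b C := by
  have hb : r - infDist a C ≤ infDist b C := by
    refine (le_infDist hC).2 fun q hq => ?_
    have ha : r - dist b q ≤ infDist a C :=
      (le_infDist hC).2 fun p hp => by linarith [h p hp q hq]
    linarith
  linarith

end MetricLemmas

lemma infDist_le_dist_add_dist_of_mem_mInterval {X : Type*} [MetricSpace X]
    (hmed : IsMedianSpace X) {C : Set X} (hC : MConvex C) {a b x : X}
    (hx : x ∈ mInterval a b) {p q : X} (hp : p ∈ C) (hq : q ∈ C) :
    infDist x C ≤ dist a p + dist b q := by
  obtain ⟨m, ⟨⟨hxp, hpq⟩, hxq⟩, -⟩ := hmed x p q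
  have hm : infDist x C ≤ dist x m := infDist_le_dist_of_mem (hC p hp q hq hpq)
  linarith [two_mul_dist_add_dist_eq_of_median hxp hpq hxq,
    dist_add_dist_le_of_mem_mInterval hx p q]

theorem statement9_general (X : Type*) [MetricSpace X] (hmed : IsMedianSpace X)
    (C : Set X) (hCconv : MConvex C)
    (a b x : X) (hx : x ∈ mInterval a b) :
    Metric.infDist x C ≤ Metric.infDist a C + Metric.infDist b C := by
  rcases C.eq_empty_or_nonempty with rfl | hCne
  · simp
  exact le_infDist_add_infDist hCne fun p hp q hq =>
    infDist_le_dist_add_dist_of_mem_mInterval hmed hCconv hx hp hq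

/-- In a median space, for a nonempty convex subset `C` and `x ∈ [a,b]`,
`d(x,C) ≤ d(a,C) + d(b,C)`. -/
theorem statement9 (X : Type*) [MetricSpace X] (hmed : IsMedianSpace X)
    (C : Set X) (hCne : C.Nonempty) (hCconv : MConvex C)
    (a b x : X) (hx : x ∈ mInterval a b) :
    Metric.infDist x C ≤ Metric.infDist a C + Metric.infDist b C :=
  statement9_general X hmed C hCconv a b x hx
end

section
/- Let X be a complete median space and let C₁, C₂ be nonempty closed convex subsets of X. Then the join [C₁, C₂] := ⋃_{a ∈ C₁, b ∈ C₂} [a,b] is a closed subset of X. -/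
/-!
Every nonempty closed convex set `C` of a complete median space has a gate map: the nearest-point
projection `π`, which satisfies `π x ∈ [x, c]` for all `c ∈ C`. Existence comes from the median
estimate `d(c, c') ≤ (d(x, c) - d(x, C)) + (d(x, c') - d(x, C))`, which makes minimizing sequences
Cauchy; gate maps are 1-Lipschitz. With the gates `π₁, π₂` of `C₁, C₂`, a point `x` lies in the
join iff `x ∈ [π₁ x, π₂ x]`, and this is a closed condition on `x`.
-/

open Filter Topology Metric

section Gates

variable {X : Type*} [MetricSpace X]

def IsGate (C : Set X) (x p : X) : Prop :=
  p ∈ C ∧ ∀ c ∈ C, p ∈ mInterval x c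

lemma MConvex.dist_le_sub_infDist_add_sub_infDist (hmed : IsMedianSpace X) {C : Set X}
    (hcv : MConvex C) (x : X) {c c' : X} (hc : c ∈ C) (hc' : c' ∈ C) :
    dist c c' ≤ (dist x c - infDist x C) + (dist x c' - infDist x C) := by
  obtain ⟨m, ⟨⟨hcx, hxc'⟩, hcc'⟩, -⟩ := hmed c x c'
  have hxm : infDist x C ≤ dist x m := infDist_le_dist_of_mem (hcv c hc c' hc' hcc')
  simp only [mInterval, Set.mem_ofPred_eq] at hcx hxc' hcc'
  linarith [dist_comm c x, dist_comm m x]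

lemma MConvex.exists_dist_eq_infDist [CompleteSpace X] (hmed : IsMedianSpace X) {C : Set X}
    (hne : C.Nonempty) (hcl : IsClosed C) (hcv : MConvex C) (x : X) :
    ∃ p ∈ C, dist x p = infDist x C := by
  set r := infDist x C
  have hδ : Tendsto (fun n : ℕ => 1 / ((n : ℝ) + 1)) atTop (𝓝 0) :=
    tendsto_one_div_add_atTop_nhds_zero_nat
  choose u huC hux using fun n : ℕ =>
    (infDist_lt_iff hne).mp (lt_add_of_pos_right r (Nat.one_div_pos_of_nat (n := n)))
  have hu : CauchySeq u := by
    refine cauchySeq_of_le_tendsto_0 (fun N : ℕ => 1 / ((N : ℝ) + 1) + 1 / ((N : ℝ) + 1))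
      (fun n m N hn hm => ?_) (by simpa using hδ.add hδ)
    have hn' : 1 / ((n : ℝ) + 1) ≤ 1 / ((N : ℝ) + 1) := Nat.one_div_le_one_div hn
    have hm' : 1 / ((m : ℝ) + 1) ≤ 1 / ((N : ℝ) + 1) := Nat.one_div_le_one_div hm
    linarith [hcv.dist_le_sub_infDist_add_sub_infDist hmed x (huC n) (huC m), hux n, hux m]
  obtain ⟨p, hp⟩ := cauchySeq_tendsto_of_complete hu
  have hpC : p ∈ C := hcl.mem_of_tendsto hp (Eventually.of_forall huC)
  refine ⟨p, hpC, le_antisymm ?_ (infDist_le_dist_of_mem hpC)⟩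
  exact le_of_tendsto_of_tendsto' (tendsto_const_nhds.dist hp)
    (by simpa using tendsto_const_nhds.add hδ) fun n => (hux n).le

/-- A nearest point is a gate: the median of `x`, `p`, `c` lies in `C ∩ [x, p]`, so it is `p`. -/
lemma MConvex.isGate_of_dist_eq_infDist (hmed : IsMedianSpace X) {C : Set X} (hcv : MConvex C)
    {x p : X} (hpC : p ∈ C) (hp : dist x p = infDist x C) : IsGate C x p := by
  refine ⟨hpC, fun c hc => ?_⟩
  obtain ⟨m, ⟨⟨hxp, hpc⟩, hxc⟩, -⟩ := hmed x p c
  have hxm : infDist x C ≤ dist x m := infDist_le_dist_of_mem (hcv p hpC c hc hpc)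
  have hmp : m = p := by
    simp only [mInterval, Set.mem_ofPred_eq] at hxp
    exact dist_le_zero.mp (by linarith)
  rwa [hmp] at hxc

lemma MConvex.exists_isGate [CompleteSpace X] (hmed : IsMedianSpace X) {C : Set X}
    (hne : C.Nonempty) (hcl : IsClosed C) (hcv : MConvex C) (x : X) : ∃ p, IsGate C x p := by
  obtain ⟨p, hpC, hp⟩ := hcv.exists_dist_eq_infDist hmed hne hcl x
  exact ⟨p, hcv.isGate_of_dist_eq_infDist hmed hpC hp⟩

lemma IsGate.dist_le {C : Set X} {x y p q : X} (hp : IsGate C x p) (hq : IsGate C y q) :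
    dist p q ≤ dist x y := by
  have hxq : dist x p + dist p q = dist x q := hp.2 q hq.1
  have hyp : dist y q + dist q p = dist y p := hq.2 p hp.1
  linarith [dist_triangle x y q, dist_triangle y x p, dist_comm p q, dist_comm x y]

lemma continuous_of_isGate {C : Set X} {π : X → X} (hπ : ∀ x, IsGate C x (π x)) :
    Continuous π :=
  (LipschitzWith.of_dist_le_mul (K := 1) fun x y => by
    simpa using (hπ x).dist_le (hπ y)).continuous

/-- `d(a, b) ≤ d(a, p) + d(p, q) + d(q, b)` is forced to be an
equality, which leaves no room for slack in `d(p, q) ≤ d(p, x) + d(x, q)`. -/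
lemma mem_mInterval_of_isGate {C₁ C₂ : Set X} {a b x p q : X} (ha : a ∈ C₁) (hb : b ∈ C₂)
    (hx : x ∈ mInterval a b) (hp : IsGate C₁ x p) (hq : IsGate C₂ x q) :
    x ∈ mInterval p q := by
  have hxa : dist x p + dist p a = dist x a := hp.2 a ha
  have hxb : dist x q + dist q b = dist x b := hq.2 b hb
  have hab : dist a x + dist x b = dist a b := hx
  show dist p x + dist x q = dist p q
  linarith [dist_triangle4 a p q b, dist_triangle p x q, dist_comm a x, dist_comm a p,
    dist_comm p x]

lemma join_eq_setOf_mem_mInterval_gates {C₁ C₂ : Set X} {π₁ π₂ : X → X}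
    (hπ₁ : ∀ x, IsGate C₁ x (π₁ x)) (hπ₂ : ∀ x, IsGate C₂ x (π₂ x)) :
    ⋃ a ∈ C₁, ⋃ b ∈ C₂, mInterval a b = {x | x ∈ mInterval (π₁ x) (π₂ x)} := by
  ext x
  simp only [Set.mem_iUnion, Set.mem_ofPred_eq]
  constructor
  · rintro ⟨a, ha, b, hb, hx⟩
    exact mem_mInterval_of_isGate ha hb hx (hπ₁ x) (hπ₂ x)
  · exact fun hx => ⟨π₁ x, (hπ₁ x).1, π₂ x, (hπ₂ x).1, hx⟩

lemma isClosed_setOf_mem_mInterval {f g : X → X} (hf : Continuous f) (hg : Continuous g) :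
    IsClosed {x | x ∈ mInterval (f x) (g x)} :=
  isClosed_eq ((hf.dist continuous_id).add (continuous_id.dist hg)) (hf.dist hg)

end Gates

/-- In a complete median space, the join of two nonempty closed convex subsets is closed. -/
theorem statement10 (X : Type*) [MetricSpace X] [CompleteSpace X]
    (hmed : IsMedianSpace X)
    (C₁ C₂ : Set X) (h₁ne : C₁.Nonempty) (h₂ne : C₂.Nonempty)
    (h₁cl : IsClosed C₁) (h₂cl : IsClosed C₂) (h₁cv : MConvex C₁) (h₂cv : MConvex C₂) :
    IsClosed (⋃ a ∈ C₁, ⋃ b ∈ C₂, mInterval a b) := by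
  choose π₁ hπ₁ using h₁cv.exists_isGate hmed h₁ne h₁cl
  choose π₂ hπ₂ using h₂cv.exists_isGate hmed h₂ne h₂cl
  rw [join_eq_setOf_mem_mInterval_gates hπ₁ hπ₂]
  exact isClosed_setOf_mem_mInterval (continuous_of_isGate hπ₁) (continuous_of_isGate hπ₂)
end
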